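/- For any integer n ≥ 2, the sum over k = 1,…,n-1 of cot²(πk/n) equals n²/3 + 2/3 - n. -/

import Mathlib

open Real Finset

/-! With `ζ = exp (2πi/n)` we have `cot (πk/n) = i (ζᵏ + 1) / (ζᵏ - 1)`, and for every `n`-th root
of unity `x ≠ 1`, `n (x + 1) / (x - 1) = ∑_{j=1}^{n-1} (2j - n) xʲ =: cotPoly n x`. So the values
`cot (πk/n)` are `i/n` times a finite Fourier series whose coefficients `c_j = 2j - n` are odd
(`c_{n-j} = -c_j`). Since `cotPoly n 1 = 0`, the sum of `cotPoly n (ζᵏ)²` over `1 ≤ k < n` may be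
taken over all of `range n`, where orthogonality of characters evaluates it to
`n ∑ c_j c_{n-j} = -n ∑ c_j² = -n² (n - 1) (n - 2) / 3`. -/

section CommRing

variable {R : Type*} [CommRing R]

theorem sub_one_mul_sum_range_natCast_mul_pow (x : R) (n : ℕ) :
    (x - 1) * ∑ j ∈ range n, (j : R) * x ^ j = n * x ^ n - x ^ n + 1 - ∑ j ∈ range n, x ^ j := by
  induction n with
  | zero => simp
  | succ m ih =>
    rw [sum_range_succ, sum_range_succ, mul_add, ih]
    push_cast
    ring

theorem sum_range_two_mul_sub (a : R) (m : ℕ) :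
    ∑ j ∈ range m, (2 * (j : R) - a) = m * (m - 1) - m * a := by
  induction m with
  | zero => simp
  | succ m ih =>
    rw [sum_range_succ, ih]
    push_cast
    ring

theorem sum_range_two_mul_sub_sq (a : R) (m : ℕ) :
    3 * ∑ j ∈ range m, (2 * (j : R) - a) ^ 2
      = m * (m - 1) * (4 * m - 2) - 6 * a * m * (m - 1) + 3 * a ^ 2 * m := by
  induction m with
  | zero => simp
  | succ m ih =>
    rw [sum_range_succ, mul_add, ih]
    push_cast
    ring

theorem sum_Ico_two_mul_sub (n : ℕ) : ∑ j ∈ Ico 1 n, (2 * (j : R) - n) = 0 := by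
  rcases n.eq_zero_or_pos with rfl | hn
  · simp
  have h := sum_range_eq_add_Ico (fun j => 2 * (j : R) - n) hn
  rw [sum_range_two_mul_sub] at h
  push_cast at h
  linear_combination -h

theorem sum_Ico_two_mul_sub_sq (n : ℕ) :
    3 * ∑ j ∈ Ico 1 n, (2 * (j : R) - n) ^ 2 = (n : R) * (n - 1) * (n - 2) := by
  rcases n.eq_zero_or_pos with rfl | hn
  · simp
  have h := sum_range_two_mul_sub_sq (n : R) n
  rw [sum_range_eq_add_Ico _ hn] at h
  push_cast at h
  linear_combination h

def cotPoly (n : ℕ) (x : R) : R :=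
  ∑ j ∈ Ico 1 n, (2 * (j : R) - n) * x ^ j

theorem cotPoly_one (n : ℕ) : cotPoly n (1 : R) = 0 := by
  simpa [cotPoly] using sum_Ico_two_mul_sub (R := R) n

end CommRing

section IsDomain

variable {R : Type*} [CommRing R] [IsDomain R]

theorem geom_sum_eq_zero_of_pow_eq_one {x : R} {n : ℕ} (hx : x ≠ 1) (hxn : x ^ n = 1) :
    ∑ j ∈ range n, x ^ j = 0 :=
  eq_zero_of_ne_zero_of_mul_left_eq_zero (sub_ne_zero.2 hx) (by rw [mul_geom_sum, hxn, sub_self])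

theorem sub_one_mul_cotPoly {x : R} {n : ℕ} (hx : x ≠ 1) (hxn : x ^ n = 1) :
    (x - 1) * cotPoly n x = n * (x + 1) := by
  rcases n.eq_zero_or_pos with rfl | hn
  · simp [cotPoly]
  have hgeom := geom_sum_eq_zero_of_pow_eq_one hx hxn
  have hsplit := sum_range_eq_add_Ico (fun j => (2 * (j : R) - n) * x ^ j) hn
  have hexpand : ∑ j ∈ range n, (2 * (j : R) - n) * x ^ j
      = 2 * ∑ j ∈ range n, (j : R) * x ^ j - n * ∑ j ∈ range n, x ^ j := by
    simp only [sub_mul, sum_sub_distrib, mul_sum, mul_assoc]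
  have hweighted := sub_one_mul_sum_range_natCast_mul_pow x n
  rw [hxn, hgeom] at hweighted
  rw [hgeom] at hexpand
  simp only [Nat.cast_zero, mul_zero, zero_sub, pow_zero, mul_one] at hsplit
  rw [cotPoly]
  linear_combination -(x - 1) * hsplit + (x - 1) * hexpand + 2 * hweighted

variable {ζ : R} {n : ℕ}

theorem IsPrimitiveRoot.sum_pow_pow_eq_ite (hζ : IsPrimitiveRoot ζ n) (j : ℕ) :
    ∑ k ∈ range n, (ζ ^ k) ^ j = if n ∣ j then (n : R) else 0 := by
  simp_rw [pow_right_comm ζ _ j]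
  split_ifs with h
  · simp [(hζ.pow_eq_one_iff_dvd j).2 h]
  · exact geom_sum_eq_zero_of_pow_eq_one (mt (hζ.pow_eq_one_iff_dvd j).1 h)
      (by rw [pow_right_comm, hζ.pow_eq_one, one_pow])

theorem IsPrimitiveRoot.sum_sq_sum_Ico_mul_pow (hζ : IsPrimitiveRoot ζ n) (c : ℕ → R) :
    ∑ k ∈ range n, (∑ j ∈ Ico 1 n, c j * (ζ ^ k) ^ j) ^ 2
      = n * ∑ i ∈ Ico 1 n, c i * c (n - i) := by
  have hpair : ∀ i ∈ Ico 1 n, ∀ j ∈ Ico 1 n, n ∣ i + j ↔ n - i = j := by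
    intro i hi j hj
    rw [mem_Ico] at hi hj
    constructor
    · intro h
      have := Nat.eq_of_dvd_of_lt_two_mul (by omega) h (by omega)
      omega
    · rintro rfl
      rw [Nat.add_sub_cancel' hi.2.le]
  calc ∑ k ∈ range n, (∑ j ∈ Ico 1 n, c j * (ζ ^ k) ^ j) ^ 2
      = ∑ i ∈ Ico 1 n, ∑ j ∈ Ico 1 n, c i * c j * ∑ k ∈ range n, (ζ ^ k) ^ (i + j) := by
        simp_rw [sq, sum_mul_sum, mul_sum]
        rw [sum_comm]
        refine sum_congr rfl fun i _ => ?_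
        rw [sum_comm]
        refine sum_congr rfl fun j _ => sum_congr rfl fun k _ => ?_
        ring
    _ = ∑ i ∈ Ico 1 n, ∑ j ∈ Ico 1 n, if n - i = j then c i * c j * n else 0 := by
        refine sum_congr rfl fun i hi => sum_congr rfl fun j hj => ?_
        simp only [hζ.sum_pow_pow_eq_ite, hpair i hi j hj, mul_ite, mul_zero]
    _ = n * ∑ i ∈ Ico 1 n, c i * c (n - i) := by
        rw [mul_sum]
        refine sum_congr rfl fun i hi => ?_
        rw [sum_ite_eq, if_pos]
        · ring
        · rw [mem_Ico] at hi ⊢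
          omega

theorem IsPrimitiveRoot.sum_cotPoly_sq (hζ : IsPrimitiveRoot ζ n) :
    3 * ∑ k ∈ range n, cotPoly n (ζ ^ k) ^ 2 = -(n : R) ^ 2 * (n - 1) * (n - 2) := by
  have hodd : ∀ i ∈ Ico 1 n, 2 * ((n - i : ℕ) : R) - n = -(2 * (i : R) - n) := by
    intro i hi
    rw [Nat.cast_sub (mem_Ico.1 hi).2.le]
    ring
  simp only [cotPoly]
  rw [hζ.sum_sq_sum_Ico_mul_pow,
    sum_congr rfl fun i hi => by rw [hodd i hi, mul_neg, ← sq], sum_neg_distrib]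
  linear_combination -(n : R) * sum_Ico_two_mul_sub_sq (R := R) n

end IsDomain

open Complex in
theorem Complex.ofReal_cot_pi_mul_natCast_div {n k : ℕ} (hn : n ≠ 0) (hk : ¬ n ∣ k) :
    (Real.cot (π * k / n) : ℂ) = I * cotPoly n (exp (2 * π * I / n) ^ k) / n := by
  have hζ := isPrimitiveRoot_exp n hn
  set x := exp (2 * π * I / n) ^ k with hx_def
  have hx : x ≠ 1 := mt (hζ.pow_eq_one_iff_dvd k).1 hk
  have hxn : x ^ n = 1 := by rw [pow_right_comm, hζ.pow_eq_one, one_pow]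
  have hcot : (Real.cot (π * k / n) : ℂ) = (x + 1) / (I * (1 - x)) := by
    have harg : ((π * k / n : ℝ) : ℂ) = π * (k / n) := by push_cast; ring
    rw [ofReal_cot, harg, cot_pi_eq_exp_ratio, hx_def, ← exp_nat_mul]
    ring_nf
  rw [hcot, div_eq_div_iff (mul_ne_zero I_ne_zero (sub_ne_zero.2 hx.symm)) (Nat.cast_ne_zero.2 hn)]
  linear_combination -sub_one_mul_cotPoly hx hxn + cotPoly n x * (x - 1) * I_sq

/-- For any integer `n ≥ 2`,
`∑_{k=1}^{n-1} cot²(πk/n) = n²/3 + 2/3 - n`. -/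
theorem sum_cot_sq (n : ℕ) (hn : 2 ≤ n) :
    ∑ k ∈ Finset.Ico 1 n, (Real.cot (Real.pi * k / n)) ^ 2
      = (n : ℝ) ^ 2 / 3 + 2 / 3 - (n : ℝ) := by
  have hn0 : n ≠ 0 := by omega
  set ζ := Complex.exp (2 * π * Complex.I / n)
  have hterm : ∀ k ∈ Ico 1 n,
      (Real.cot (π * k / n) : ℂ) ^ 2 = -(cotPoly n (ζ ^ k) ^ 2 / n ^ 2) := by
    intro k hk
    rw [mem_Ico] at hk
    rw [Complex.ofReal_cot_pi_mul_natCast_div hn0 (Nat.not_dvd_of_pos_of_lt hk.1 hk.2), div_pow,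
      mul_pow, Complex.I_sq, neg_one_mul, neg_div]
  have hsum : ∑ k ∈ range n, cotPoly n (ζ ^ k) ^ 2 = ∑ k ∈ Ico 1 n, cotPoly n (ζ ^ k) ^ 2 := by
    rw [sum_range_eq_add_Ico _ (by omega), pow_zero, cotPoly_one, sq, zero_mul, zero_add]
  have hparseval := (Complex.isPrimitiveRoot_exp n hn0).sum_cotPoly_sq
  have hcomplex : ∑ k ∈ Ico 1 n, (Real.cot (π * k / n) : ℂ) ^ 2 = (n : ℂ) ^ 2 / 3 + 2 / 3 - n := by
    rw [sum_congr rfl hterm, sum_neg_distrib, ← sum_div, ← hsum]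
    field_simp
    linear_combination -hparseval
  apply Complex.ofReal_injective
  push_cast at hcomplex ⊢
  exact hcomplex
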